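/- Fix an integer n ≥ 1 and define σ = {(a,b,c) ∈ R^3 : a ≥ 0, c ≥ 0, 2b − a ≥ 0, b + nc − a ≥ 0}, and let M be the linear map of R^3 given by the matrix with rows (1,1,−n), (0,1,0), (0,0,1). Then for all real λ, μ > 0, setting v_1 = λ(1,1,0), v_3 = μ(0,0,1), and p = (2λnμ, λnμ, λμ)/(λ + nμ): (i) p lies on the Euclidean segment from v_1 to M^{−1}v_3 = μ(n,0,1) and satisfies b = nc (i.e. p lies in the plane H); (ii) the vector v_3 − p is a positive scalar multiple of M((M^{−1}v_3) − v_1), so the concatenated path from v_1 to p to v_3 is a straight line in the integral affine structure that bends by M across H; (iii) the segment from v_1 to p lies in σ and in the hyperplane {a = b + nc}, and the segment from p to v_3 lies in σ and in the hyperplane {a = 2b}. Moreover the Euclidean segments joining any two points of the three rays R_{≥0}(1,1,0), R_{≥0}(0,1,0), R_{≥0}(0,0,1) all lie in σ. -/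

import Mathlib

open Matrix

/-- The cone `σ = {(a,b,c) : a ≥ 0, c ≥ 0, 2b − a ≥ 0, b + nc − a ≥ 0} ⊂ ℝ³`. -/
def flopCone (n : ℕ) : Set (Fin 3 → ℝ) :=
  {q | 0 ≤ q 0 ∧ 0 ≤ q 2 ∧ 0 ≤ 2 * q 1 - q 0 ∧ 0 ≤ q 1 + n * q 2 - q 0}

/-- The monodromy matrix `M` with rows `(1,1,−n), (0,1,0), (0,0,1)`, acting on `ℝ³`. -/
def monodromyMatR (n : ℕ) : Matrix (Fin 3) (Fin 3) ℝ :=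
  !![1, 1, -(n : ℝ); 0, 1, 0; 0, 0, 1]

/-- The union of the three rays `ℝ_{≥0}(1,1,0)`, `ℝ_{≥0}(0,1,0)`, `ℝ_{≥0}(0,0,1)`. -/
def flopRays : Set (Fin 3 → ℝ) :=
  {q | ∃ c : ℝ, 0 ≤ c ∧
    (q = c • ![1, 1, 0] ∨ q = c • ![0, 1, 0] ∨ q = c • ![0, 0, 1])}

/-!
The bending point `p` is `λμ/(λ + nμ) • (2n, n, 1)`, a point of the edge of `σ` where the faces
`{a = b + nc}` and `{a = 2b}` meet, and it is the convex combination `(nμ v₁ + λ M⁻¹v₃)/(λ + nμ)`.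
Everything else is convexity: `σ` and both hyperplanes are convex, so a segment lies in them as soon
as its endpoints do, and `σ` is a cone containing the generators of the three rays.
-/

lemma monodromyMatR_mulVec (n : ℕ) (x : Fin 3 → ℝ) :
    monodromyMatR n *ᵥ x = ![x 0 + x 1 - n * x 2, x 1, x 2] := by
  ext i
  fin_cases i <;> simp [monodromyMatR, mulVec, vecHead, vecTail, sub_eq_add_neg, add_assoc]

lemma monodromyMatR_mulVec_natCast_zero_one (n : ℕ) :
    monodromyMatR n *ᵥ ![(n : ℝ), 0, 1] = ![0, 0, 1] := by
  simp [monodromyMatR_mulVec]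

lemma convex_flopCone (n : ℕ) : Convex ℝ (flopCone n) := by
  rintro x ⟨hx₀, hx₂, hx₃, hx₄⟩ y ⟨hy₀, hy₂, hy₃, hy₄⟩ a b ha hb -
  simp only [flopCone, Set.mem_ofPred_eq, Pi.add_apply, Pi.smul_apply, smul_eq_mul]
  refine ⟨by positivity, by positivity, ?_, ?_⟩
  · nlinarith [mul_nonneg ha hx₃, mul_nonneg hb hy₃]
  · nlinarith [mul_nonneg ha hx₄, mul_nonneg hb hy₄]

lemma smul_mem_flopCone {n : ℕ} {c : ℝ} (hc : 0 ≤ c) {x : Fin 3 → ℝ} (hx : x ∈ flopCone n) :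
    c • x ∈ flopCone n := by
  obtain ⟨h₀, h₂, h₃, h₄⟩ := hx
  simp only [flopCone, Set.mem_ofPred_eq, Pi.smul_apply, smul_eq_mul]
  refine ⟨by positivity, by positivity, ?_, ?_⟩
  · nlinarith [mul_nonneg hc h₃]
  · nlinarith [mul_nonneg hc h₄]

lemma flopRays_subset_flopCone (n : ℕ) : flopRays ⊆ flopCone n := by
  rintro _ ⟨c, hc, rfl | rfl | rfl⟩ <;> refine smul_mem_flopCone hc ?_ <;>
    simp [flopCone]

lemma convex_setOf_eq_add_mul (n : ℕ) : Convex ℝ {q : Fin 3 → ℝ | q 0 = q 1 + n * q 2} := by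
  intro x hx y hy a b _ _ _
  simp only [Set.mem_ofPred_eq, Pi.add_apply, Pi.smul_apply, smul_eq_mul] at *
  linear_combination a * hx + b * hy

lemma convex_setOf_eq_two_mul : Convex ℝ {q : Fin 3 → ℝ | q 0 = 2 * q 1} := by
  intro x hx y hy a b _ _ _
  simp only [Set.mem_ofPred_eq, Pi.add_apply, Pi.smul_apply, smul_eq_mul] at *
  linear_combination a * hx + b * hy

noncomputable def bendPoint (n : ℕ) (lam mu : ℝ) : Fin 3 → ℝ :=
  (lam + n * mu)⁻¹ • ![2 * lam * n * mu, lam * n * mu, lam * mu]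

section bendPoint

variable (n : ℕ) {lam mu : ℝ}

lemma bendPoint_eq_smul :
    bendPoint n lam mu = (lam * mu / (lam + n * mu)) • ![2 * (n : ℝ), n, 1] := by
  ext i
  fin_cases i <;> simp [bendPoint] <;> ring

lemma bendPoint_mem_flopCone (hlam : 0 ≤ lam) (hmu : 0 ≤ mu) :
    bendPoint n lam mu ∈ flopCone n := by
  rw [bendPoint_eq_smul]
  exact smul_mem_flopCone (by positivity) (by simp [flopCone]; linarith)

lemma bendPoint_one : bendPoint n lam mu 1 = n * bendPoint n lam mu 2 := by
  simp [bendPoint_eq_smul]; ring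

lemma bendPoint_zero_eq_add :
    bendPoint n lam mu 0 = bendPoint n lam mu 1 + n * bendPoint n lam mu 2 := by
  simp [bendPoint_eq_smul]; ring

lemma bendPoint_zero_eq_two_mul : bendPoint n lam mu 0 = 2 * bendPoint n lam mu 1 := by
  simp [bendPoint_eq_smul]; ring

lemma bendPoint_mem_segment (hlam : 0 < lam) (hmu : 0 ≤ mu) :
    bendPoint n lam mu ∈ segment ℝ (lam • ![1, 1, 0]) (mu • ![(n : ℝ), 0, 1]) := by
  have hs : 0 < lam + n * mu := by positivity
  refine ⟨n * mu / (lam + n * mu), lam / (lam + n * mu), by positivity, by positivity,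
    by field_simp; ring, ?_⟩
  ext i
  fin_cases i <;> simp [bendPoint] <;> ring

lemma sub_bendPoint_eq_smul (hlam : 0 < lam) (hmu : 0 ≤ mu) :
    mu • ![0, 0, 1] - bendPoint n lam mu =
      (n * mu / (lam + n * mu)) • monodromyMatR n *ᵥ (mu • ![(n : ℝ), 0, 1] - lam • ![1, 1, 0]) := by
  rw [monodromyMatR_mulVec]
  ext i
  fin_cases i <;> simp [bendPoint] <;> field_simp <;> ring

end bendPoint

theorem stmt16 (n : ℕ) (hn : 1 ≤ n) (lam mu : ℝ) (hlam : 0 < lam) (hmu : 0 < mu) :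
    -- v₁ = λ(1,1,0), v₃ = μ(0,0,1), q = M⁻¹v₃ = μ(n,0,1),
    -- p = (2λnμ, λnμ, λμ)/(λ + nμ)
    ∀ v1 v3 q p : Fin 3 → ℝ,
      v1 = lam • ![1, 1, 0] →
      v3 = mu • ![0, 0, 1] →
      q = mu • ![(n : ℝ), 0, 1] →
      p = (lam + n * mu)⁻¹ • ![2 * lam * n * mu, lam * n * mu, lam * mu] →
      -- `q` really is `M⁻¹v₃`:
      ((monodromyMatR n).mulVec q = v3 ∧
      -- (i) `p` lies on the segment from `v₁` to `M⁻¹v₃` and lies in the plane `H`: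
      p ∈ segment ℝ v1 q ∧ p 1 = n * p 2 ∧
      -- (ii) `v₃ − p` is a positive multiple of `M(M⁻¹v₃ − v₁)`:
      (∃ s : ℝ, 0 < s ∧ v3 - p = s • (monodromyMatR n).mulVec (q - v1)) ∧
      -- (iii) the two segments lie in `σ` and in the stated hyperplanes:
      segment ℝ v1 p ⊆ flopCone n ∩ {q' | q' 0 = q' 1 + n * q' 2} ∧
      segment ℝ p v3 ⊆ flopCone n ∩ {q' | q' 0 = 2 * q' 1} ∧
      -- moreover, Euclidean segments between points of the three rays lie in `σ`:
      ∀ a b : Fin 3 → ℝ, a ∈ flopRays → b ∈ flopRays →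
        segment ℝ a b ⊆ flopCone n) := by
  rintro v1 v3 q p rfl rfl rfl rfl
  have hn' : (0 : ℝ) < n := by exact_mod_cast hn
  have hv1 : lam • ![1, 1, 0] ∈ flopCone n := flopRays_subset_flopCone n ⟨lam, hlam.le, .inl rfl⟩
  have hv3 : mu • ![0, 0, 1] ∈ flopCone n :=
    flopRays_subset_flopCone n ⟨mu, hmu.le, .inr (.inr rfl)⟩
  have hp := bendPoint_mem_flopCone n hlam.le hmu.le
  refine ⟨by rw [mulVec_smul, monodromyMatR_mulVec_natCast_zero_one], bendPoint_mem_segment n hlam hmu.le, bendPoint_one n,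
    ⟨n * mu / (lam + n * mu), by positivity, sub_bendPoint_eq_smul n hlam hmu.le⟩,
    ((convex_flopCone n).inter (convex_setOf_eq_add_mul n)).segment_subset
      ⟨hv1, by simp⟩ ⟨hp, bendPoint_zero_eq_add n⟩,
    ((convex_flopCone n).inter convex_setOf_eq_two_mul).segment_subset
      ⟨hp, bendPoint_zero_eq_two_mul n⟩ ⟨hv3, by simp⟩,
    fun a b ha hb => (convex_flopCone n).segment_subset
      (flopRays_subset_flopCone n ha) (flopRays_subset_flopCone n hb)⟩
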